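/- Let M be a positroid with decorated permutation (π, col) and j a non-fixed point of π, and let M' = { H ∈ M : j ∈ H } with decorated permutation (μ, col''). Then μ(j) = j, and col''(j) = -1 (j lies in every basis of M'). Consequently the decorated permutation of the contraction M/{j} is obtained from (μ, col'') by switching col(j) to +1. -/

import Mathlib

open Finset

/-- Position of `a` in the cyclic (linear) order starting at `t` on `Fin n`. -/
def cval {n : ℕ} (t a : Fin n) : ℕ := ((a - t : Fin n) : ℕ)

/-- Gale order on finsets of `Fin n` induced by the linear order with key `f`:
compare the sorted lists of keys coordinatewise. -/
def galeLEKey {n : ℕ} (f : Fin n → ℕ) (A B : Finset (Fin n)) : Prop :=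
  List.Forall₂ (· ≤ ·) ((A.image f).sort (· ≤ ·)) ((B.image f).sort (· ≤ ·))

/-- Gale order `≤_t` induced by the cyclic order starting at `t`. -/
def galeLE {n : ℕ} (t : Fin n) (A B : Finset (Fin n)) : Prop :=
  galeLEKey (cval t) A B

/-- The set of maximal elements of `D` w.r.t. `≤_a` (a singleton when `D` is nonempty). -/
def cmax {n : ℕ} (a : Fin n) (D : Finset (Fin n)) : Finset (Fin n) :=
  D.filter (fun x => ∀ y ∈ D, cval a y ≤ cval a x)

/-- The set of minimal elements of `D` w.r.t. `≤_a` (a singleton when `D` is nonempty). -/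
def cmin {n : ℕ} (a : Fin n) (D : Finset (Fin n)) : Finset (Fin n) :=
  D.filter (fun x => ∀ y ∈ D, cval a x ≤ cval a y)

/-- A Grassmann necklace on `[n]`. -/
def IsGrassmannNecklace {n : ℕ} [NeZero n] (I : Fin n → Finset (Fin n)) : Prop :=
  ∀ i : Fin n,
    (i ∈ I i → ∃ j : Fin n, I (i + 1) = insert j (I i \ {i})) ∧
    (i ∉ I i → I (i + 1) = I i)

/-- A decorated permutation: a permutation with fixed points colored by `1` or `-1`
(non-fixed points carry the dummy color `1`). -/
structure DecoratedPerm (n : ℕ) where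
  π : Equiv.Perm (Fin n)
  col : Fin n → ℤ
  col_fixed : ∀ i, π i = i → col i = 1 ∨ col i = -1
  col_nonfixed : ∀ i, π i ≠ i → col i = 1

/-- The Grassmann necklace associated to a decorated permutation:
`I_r = { i : i <_r π⁻¹(i), or π(i) = i and col(i) = -1 }`. -/
def necklaceOf {n : ℕ} (P : DecoratedPerm n) : Fin n → Finset (Fin n) :=
  fun r => Finset.univ.filter
    (fun i => cval r i < cval r (P.π.symm i) ∨ (P.π i = i ∧ P.col i = -1))

/-- The forward map from Grassmann necklaces to decorated permutations:
`P` corresponds to the necklace `I`. -/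
def Corresponds {n : ℕ} [NeZero n] (I : Fin n → Finset (Fin n)) (P : DecoratedPerm n) : Prop :=
  ∀ i : Fin n,
    ((I (i + 1) = I i ∧ i ∉ I i) → (P.π i = i ∧ P.col i = 1)) ∧
    ((I (i + 1) = I i ∧ i ∈ I i) → (P.π i = i ∧ P.col i = -1)) ∧
    (∀ j : Fin n, j ≠ i → i ∈ I i → I (i + 1) = insert j (I i \ {i}) → P.π i = j)

/-- `phiSet I j a` is `{j}` if `j ∈ I_a`, and otherwise `{max_a (I_a \ I_j)}`. -/
def phiSet {n : ℕ} (I : Fin n → Finset (Fin n)) (j a : Fin n) : Finset (Fin n) :=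
  if j ∈ I a then {j} else cmax a (I a \ I j)

/-- One pass of the contraction algorithm (fuel-indexed; the loop walks `a ← a+1`). -/
def contractLoop {n : ℕ} [NeZero n] (π : Equiv.Perm (Fin n)) (j : Fin n) :
    ℕ → (Fin n → Fin n) → (Fin n → ℤ) → Fin n → Fin n →
      (Fin n → Fin n) × (Fin n → ℤ)
  | 0, μ, c, q, a => (Function.update μ a q, c)
  | fuel + 1, μ, c, q, a =>
    if π a = j then (Function.update μ a q, c)
    else if q = a ∨ (cval (a + 1) q < cval (a + 1) (π a) ∧
                      cval (a + 1) (π a) < cval (a + 1) j) then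
      contractLoop π j fuel (Function.update μ a q)
        (if q = a then Function.update c a 1 else c) (π a) (a + 1)
    else
      contractLoop π j fuel μ c q (a + 1)

/-- The contraction algorithm: output `(μ, col')` from `(π, col)` and `j`. -/
def contractAlg {n : ℕ} [NeZero n] (π : Equiv.Perm (Fin n)) (col : Fin n → ℤ) (j : Fin n) :
    (Fin n → Fin n) × (Fin n → ℤ) :=
  contractLoop π j n (Function.update (⇑π) j j) (Function.update col j 1) (π j) (j + 1)

/-- One pass of the restriction algorithm (the loop walks `a ← a-1`). -/
def restrictLoop {n : ℕ} [NeZero n] (π : Equiv.Perm (Fin n)) (j : Fin n) :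
    ℕ → (Fin n → Fin n) → (Fin n → ℤ) → Fin n → Fin n →
      (Fin n → Fin n) × (Fin n → ℤ)
  | 0, μ, c, q, a => (Function.update μ a q, c)
  | fuel + 1, μ, c, q, a =>
    if π a = j then (Function.update μ a q, c)
    else if q = a ∨ (cval a j < cval a (π a) ∧ cval a (π a) < cval a q) then
      restrictLoop π j fuel (Function.update μ a q)
        (if q = a then Function.update c a 1 else c) (π a) (a - 1)
    else
      restrictLoop π j fuel μ c q (a - 1)

/-- The restriction algorithm: output `(μ, col')` from `(π, col)` and `j`. -/
def restrictAlg {n : ℕ} [NeZero n] (π : Equiv.Perm (Fin n)) (col : Fin n → ℤ) (j : Fin n) :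
    (Fin n → Fin n) × (Fin n → ℤ) :=
  restrictLoop π j n (Function.update (⇑π) j j) (Function.update col j 1) (π j) (j - 1)

/-!
Every necklace set `I_r` of a decorated permutation lies in its own positroid: in the order
starting at `t`, each initial segment of `I_r` exceeds that of `I_t` only by arcs `q ↦ π q` that
cross the cut at `r` forwards, and a permutation crosses every cut as often forwards as backwards.
For `Q` this puts `j` into every `I_r(Q)`, which forces `π j = j` with colour `-1`. The necklace of
`R` is then that of `Q` with `j` removed, and since `j` also lies in every basis of `M'`, removing
`j` from both sides of each Gale comparison identifies `M/{j}` with the positroid of `R`.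
-/

section Gale

lemma List.countP_le_of_forall₂ {α : Type*} [LinearOrder α] {L M : List α}
    (h : List.Forall₂ (· ≤ ·) L M) (x : α) : M.countP (· ≤ x) ≤ L.countP (· ≤ x) := by
  induction h with
  | nil => simp
  | @cons a b l m hab _ ih =>
    simp only [List.countP_cons, decide_eq_true_eq]
    split_ifs with hb ha <;> first | omega | exact (ha (hab.trans hb)).elim

lemma List.forall₂_of_countP_le {α : Type*} [LinearOrder α] {L M : List α}
    (hL : L.Pairwise (· ≤ ·)) (hM : M.Pairwise (· ≤ ·)) (hlen : L.length = M.length)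
    (hcount : ∀ x, M.countP (· ≤ x) ≤ L.countP (· ≤ x)) : List.Forall₂ (· ≤ ·) L M := by
  induction L generalizing M with
  | nil => cases M <;> simp_all
  | cons a l ih =>
    obtain _ | ⟨b, m⟩ := M
    · simp at hlen
    rw [List.pairwise_cons] at hL hM
    have hab : a ≤ b := by
      by_contra! hba
      have hl : l.countP (· ≤ b) = 0 :=
        List.countP_eq_zero.mpr fun c hc => by simpa using hba.trans_le (hL.1 c hc)
      simpa [List.countP_cons, hl, hba.not_ge] using hcount b
    refine .cons hab (ih hL.2 hM.2 (by simpa using hlen) fun x => ?_)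
    have hx := hcount x
    simp only [List.countP_cons, decide_eq_true_eq] at hx
    by_cases hb : b ≤ x
    · simp only [hb, hab.trans hb, if_true] at hx
      omega
    · have hm : m.countP (· ≤ x) = 0 :=
        List.countP_eq_zero.mpr fun c hc => by simpa using (not_le.mp hb).trans_le (hM.1 c hc)
      omega

lemma countP_sort_image_eq_card_filter {n : ℕ} {f : Fin n → ℕ} (hf : Function.Injective f)
    (A : Finset (Fin n)) (x : ℕ) :
    ((A.image f).sort (· ≤ ·)).countP (· ≤ x) = #{a ∈ A | f a ≤ x} := by
  rw [(sort_perm_toList _ _).countP_eq, ← Multiset.coe_countP, coe_toList,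
    Multiset.countP_eq_card_filter]
  change #{b ∈ A.image f | b ≤ x} = _
  rw [filter_image, card_image_of_injective _ hf]

lemma galeLEKey_iff {n : ℕ} {f : Fin n → ℕ} (hf : Function.Injective f) (A B : Finset (Fin n)) :
    galeLEKey f A B ↔ #A = #B ∧ ∀ x, #{b ∈ B | f b ≤ x} ≤ #{a ∈ A | f a ≤ x} := by
  have hlen (C : Finset (Fin n)) : ((C.image f).sort (· ≤ ·)).length = #C := by
    rw [length_sort, card_image_of_injective _ hf]
  unfold galeLEKey
  constructor
  · intro h
    refine ⟨by simpa only [hlen] using h.length_eq, fun x => ?_⟩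
    simpa only [countP_sort_image_eq_card_filter hf] using List.countP_le_of_forall₂ h x
  · rintro ⟨hcard, hcount⟩
    refine List.forall₂_of_countP_le (pairwise_sort _ _) (pairwise_sort _ _)
      (by simpa only [hlen] using hcard) fun x => ?_
    simpa only [countP_sort_image_eq_card_filter hf] using hcount x

lemma card_filter_erase_add {α : Type*} [DecidableEq α] (p : α → Prop) [DecidablePred p]
    {A : Finset α} {j : α} (hj : j ∈ A) :
    #{a ∈ A.erase j | p a} + (if p j then 1 else 0) = #{a ∈ A | p a} := by
  rw [filter_erase]
  split_ifs with h
  · exact card_erase_add_one (mem_filter.mpr ⟨hj, h⟩)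
  · rw [erase_eq_of_notMem (fun h' => h (mem_filter.mp h').2), add_zero]

end Gale

section CyclicOrder

variable {n : ℕ}

lemma cval_lt (t a : Fin n) : cval t a < n := (a - t).isLt

variable [NeZero n]

lemma cval_self (t : Fin n) : cval t t = 0 := by simp [cval]

lemma cval_injective (t : Fin n) : Function.Injective (cval t) :=
  fun _ _ h => sub_left_injective (Fin.val_injective h)

lemma cval_add_cval (t r a : Fin n) :
    cval r a + cval t r = cval t a ∨ cval r a + cval t r = cval t a + n := by
  have h : cval t a = (cval r a + cval t r) % n := by
    rw [cval, ← sub_add_sub_cancel a r t, Fin.val_add]; rfl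
  have := cval_lt r a
  have := cval_lt t r
  rcases Nat.lt_or_ge (cval r a + cval t r) n with hlt | hge
  · exact .inl (by rw [h, Nat.mod_eq_of_lt hlt])
  · refine .inr ?_
    rw [h, Nat.mod_eq_sub_mod hge, Nat.mod_eq_of_lt (by omega)]
    omega

lemma galeLE_iff (t : Fin n) (A B : Finset (Fin n)) :
    galeLE t A B ↔ #A = #B ∧ ∀ x, #{b ∈ B | cval t b ≤ x} ≤ #{a ∈ A | cval t a ≤ x} :=
  galeLEKey_iff (cval_injective t) A B

lemma galeLE_erase_iff (t : Fin n) {j : Fin n} {A B : Finset (Fin n)} (hA : j ∈ A) (hB : j ∈ B) :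
    galeLE t (A.erase j) (B.erase j) ↔ galeLE t A B := by
  rw [galeLE_iff, galeLE_iff, ← card_erase_add_one hA, ← card_erase_add_one hB]
  refine and_congr (by omega) (forall_congr' fun x => ?_)
  rw [← card_filter_erase_add _ hA, ← card_filter_erase_add _ hB]
  omega

lemma notMem_of_galeLE {t : Fin n} {A B : Finset (Fin n)} (h : galeLE t A B) (hA : t ∉ A) :
    t ∉ B := by
  intro hB
  have hA0 : #{a ∈ A | cval t a ≤ 0} = 0 := by
    refine card_eq_zero.mpr (filter_eq_empty_iff.mpr fun a ha ha0 => hA ?_)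
    rwa [← (cval_injective t) (by rw [cval_self]; omega : cval t a = cval t t)]
  have hB0 : 0 < #{b ∈ B | cval t b ≤ 0} :=
    card_pos.mpr ⟨t, mem_filter.mpr ⟨hB, (cval_self t).le⟩⟩
  have := ((galeLE_iff t A B).mp h).2 0
  omega

end CyclicOrder

section Necklace

variable {n : ℕ}

lemma mem_necklaceOf_of_fixed {P : DecoratedPerm n} {i : Fin n} (h : P.π i = i) (r : Fin n) :
    i ∈ necklaceOf P r ↔ P.col i = -1 := by
  have hs : P.π.symm i = i := P.π.symm_apply_eq.mpr h.symm
  simp [necklaceOf, hs, h]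

lemma mem_necklaceOf_of_ne {P : DecoratedPerm n} {i : Fin n} (h : P.π i ≠ i) (r : Fin n) :
    i ∈ necklaceOf P r ↔ cval r i < cval r (P.π.symm i) := by
  simp [necklaceOf, h]

lemma necklaceOf_eq_erase {P R : DecoratedPerm n} {j : Fin n} (hπ : R.π = P.π)
    (hfix : P.π j = j) (hRj : R.col j = 1) (hcol : ∀ i, i ≠ j → R.col i = P.col i) (t : Fin n) :
    necklaceOf R t = (necklaceOf P t).erase j := by
  ext i
  rw [mem_erase]
  by_cases hij : i = j
  · subst hij
    simp [mem_necklaceOf_of_fixed (hπ ▸ hfix : R.π i = i), hRj]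
  · simp [necklaceOf, hπ, hcol i hij, hij]

variable [NeZero n]

/-- For `π i ≠ i`, `i ∈ I_r` iff `r` lies in the cyclic interval `(π⁻¹ i, i]`, read here in the
linear order starting at `t`. -/
lemma mem_necklaceOf_iff_cval {P : DecoratedPerm n} {i : Fin n} (h : P.π i ≠ i) (t r : Fin n) :
    i ∈ necklaceOf P r ↔
      (cval t (P.π.symm i) < cval t i ∧ cval t (P.π.symm i) < cval t r ∧ cval t r ≤ cval t i) ∨
      (cval t i < cval t (P.π.symm i) ∧
        (cval t r ≤ cval t i ∨ cval t (P.π.symm i) < cval t r)) := by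
  have hne : cval t (P.π.symm i) ≠ cval t i :=
    fun hc => h (P.π.symm_apply_eq.mp (cval_injective t hc)).symm
  have := cval_add_cval t r i
  have := cval_add_cval t r (P.π.symm i)
  have := cval_lt r i
  have := cval_lt r (P.π.symm i)
  have := cval_lt t i
  have := cval_lt t (P.π.symm i)
  rw [mem_necklaceOf_of_ne h]
  omega

lemma mem_necklaceOf_sdiff_iff (P : DecoratedPerm n) (t r i : Fin n) :
    i ∈ necklaceOf P r \ necklaceOf P t ↔
      cval t (P.π.symm i) < cval t r ∧ cval t r ≤ cval t i := by
  by_cases h : P.π i = i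
  · simp only [mem_sdiff, mem_necklaceOf_of_fixed h, P.π.symm_apply_eq.mpr h.symm]
    omega
  · rw [mem_sdiff, mem_necklaceOf_iff_cval h t r, mem_necklaceOf_iff_cval h t t, cval_self]
    omega

lemma mem_necklaceOf_sdiff_iff' (P : DecoratedPerm n) (t r i : Fin n) :
    i ∈ necklaceOf P t \ necklaceOf P r ↔
      cval t i < cval t r ∧ cval t r ≤ cval t (P.π.symm i) := by
  by_cases h : P.π i = i
  · simp only [mem_sdiff, mem_necklaceOf_of_fixed h, P.π.symm_apply_eq.mpr h.symm]
    omega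
  · rw [mem_sdiff, mem_necklaceOf_iff_cval h t r, mem_necklaceOf_iff_cval h t t, cval_self]
    omega

/-- The two differences are `π L \ L` and `L \ π L` for the initial segment `L` cut off by `r`. -/
lemma card_necklaceOf_sdiff_comm (P : DecoratedPerm n) (t r : Fin n) :
    #(necklaceOf P r \ necklaceOf P t) = #(necklaceOf P t \ necklaceOf P r) := by
  set L : Finset (Fin n) := {q | cval t q < cval t r}
  have hr : necklaceOf P r \ necklaceOf P t = L.map P.π.toEmbedding \ L := by
    ext i
    rw [mem_necklaceOf_sdiff_iff]
    simp only [mem_sdiff, mem_map_equiv, L, mem_filter, mem_univ, true_and, not_lt]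
  have ht : necklaceOf P t \ necklaceOf P r = L \ L.map P.π.toEmbedding := by
    ext i
    rw [mem_necklaceOf_sdiff_iff']
    simp only [mem_sdiff, mem_map_equiv, L, mem_filter, mem_univ, true_and, not_lt]
  rw [hr, ht]
  exact card_sdiff_comm (card_map _)

lemma card_filter_necklaceOf_le (P : DecoratedPerm n) (t r : Fin n) (x : ℕ) :
    #{i ∈ necklaceOf P r | cval t i ≤ x} ≤ #{i ∈ necklaceOf P t | cval t i ≤ x} := by
  set G := {i ∈ necklaceOf P r | cval t i ≤ x}
  set F := {i ∈ necklaceOf P t | cval t i ≤ x}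
  rw [← card_sdiff_add_card_inter G F, ← card_sdiff_add_card_inter F G, inter_comm]
  refine Nat.add_le_add_right ?_ _
  by_cases hx : cval t r ≤ x
  · have hG : G \ F ⊆ necklaceOf P r \ necklaceOf P t := by
      intro i hi
      simp only [G, F, mem_sdiff, mem_filter] at hi ⊢
      tauto
    have hF : necklaceOf P t \ necklaceOf P r ⊆ F \ G := by
      intro i hi
      have hi' := (mem_necklaceOf_sdiff_iff' P t r i).mp hi
      simp only [G, F, mem_sdiff, mem_filter] at hi ⊢
      exact ⟨⟨hi.1, by omega⟩, fun h => hi.2 h.1⟩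
    calc #(G \ F) ≤ #(necklaceOf P r \ necklaceOf P t) := card_le_card hG
      _ = #(necklaceOf P t \ necklaceOf P r) := card_necklaceOf_sdiff_comm P t r
      _ ≤ #(F \ G) := card_le_card hF
  · suffices G \ F = ∅ by simp [this]
    refine eq_empty_of_forall_notMem fun i hi => ?_
    simp only [G, F, mem_sdiff, mem_filter] at hi
    have hi' : i ∈ necklaceOf P r \ necklaceOf P t :=
      mem_sdiff.mpr ⟨hi.1.1, fun h => hi.2 ⟨h, hi.1.2⟩⟩
    have := (mem_necklaceOf_sdiff_iff P t r i).mp hi'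
    omega

lemma galeLE_necklaceOf (P : DecoratedPerm n) (t r : Fin n) :
    galeLE t (necklaceOf P t) (necklaceOf P r) :=
  (galeLE_iff t _ _).mpr
    ⟨(card_sdiff_eq_card_sdiff_iff.mp (card_necklaceOf_sdiff_comm P t r)).symm,
      card_filter_necklaceOf_le P t r⟩

lemma fixed_and_col_neg_of_mem_necklaceOf_symm {P : DecoratedPerm n} {j : Fin n}
    (h : j ∈ necklaceOf P (P.π.symm j)) : P.π j = j ∧ P.col j = -1 := by
  by_cases hfix : P.π j = j
  · exact ⟨hfix, (mem_necklaceOf_of_fixed hfix _).mp h⟩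
  · have := (mem_necklaceOf_of_ne hfix _).mp h
    rw [cval_self] at this
    omega

end Necklace

theorem contraction_decorated_perm_general (n : ℕ) (P : DecoratedPerm n) (j : Fin n)
    (Q : DecoratedPerm n)
    -- `Q` is the decorated permutation of `M'`:
    (hQ : ∀ H : Finset (Fin n),
      (j ∈ H ∧ ∀ t : Fin n, galeLE t (necklaceOf P t) H) ↔
      (∀ t : Fin n, galeLE t (necklaceOf Q t) H)) :
    Q.π j = j ∧ Q.col j = -1 ∧
    ∀ R : DecoratedPerm n, R.π = Q.π → R.col j = 1 →
      (∀ i : Fin n, i ≠ j → R.col i = Q.col i) →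
      ∀ H : Finset (Fin n),
        (∃ H' : Finset (Fin n),
            (∀ t : Fin n, galeLE t (necklaceOf P t) H') ∧ j ∈ H' ∧ H = H'.erase j) ↔
        (∀ t : Fin n, galeLE t (necklaceOf R t) H) := by
  have : NeZero n := NeZero.of_pos j.pos
  have hjQ (r : Fin n) : j ∈ necklaceOf Q r := ((hQ _).mpr fun t => galeLE_necklaceOf Q t r).1
  obtain ⟨hfix, hcol⟩ := fixed_and_col_neg_of_mem_necklaceOf_symm (hjQ (Q.π.symm j))
  refine ⟨hfix, hcol, fun R hπ hRj hRcol H => ?_⟩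
  have hR := necklaceOf_eq_erase hπ hfix hRj hRcol
  constructor
  · rintro ⟨H', hH', hjH', rfl⟩ t
    rw [hR t, galeLE_erase_iff t (hjQ t) hjH']
    exact (hQ H').mp ⟨hjH', hH'⟩ t
  · intro hH
    have hjH : j ∉ H := notMem_of_galeLE (hH j) (by rw [hR j]; exact notMem_erase j _)
    have hQH (t : Fin n) : galeLE t (necklaceOf Q t) (insert j H) := by
      rw [← galeLE_erase_iff t (hjQ t) (mem_insert_self j H), erase_insert hjH, ← hR t]
      exact hH t
    exact ⟨insert j H, ((hQ _).mpr hQH).2, mem_insert_self j H, (erase_insert hjH).symm⟩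

/-- if `(μ, col'')` is the decorated permutation of `M' = {H ∈ M : j ∈ H}`,
then `μ(j) = j` with `col''(j) = -1`, and switching this color to `+1` gives the decorated
permutation of the contraction `M/{j}`. -/
theorem contraction_decorated_perm (n : ℕ) (P : DecoratedPerm n) (j : Fin n)
    (hj : P.π j ≠ j) (Q : DecoratedPerm n)
    -- `Q` is the decorated permutation of `M'`:
    (hQ : ∀ H : Finset (Fin n),
      (j ∈ H ∧ ∀ t : Fin n, galeLE t (necklaceOf P t) H) ↔
      (∀ t : Fin n, galeLE t (necklaceOf Q t) H)) :
    Q.π j = j ∧ Q.col j = -1 ∧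
    ∀ R : DecoratedPerm n, R.π = Q.π → R.col j = 1 →
      (∀ i : Fin n, i ≠ j → R.col i = Q.col i) →
      ∀ H : Finset (Fin n),
        (∃ H' : Finset (Fin n),
            (∀ t : Fin n, galeLE t (necklaceOf P t) H') ∧ j ∈ H' ∧ H = H'.erase j) ↔
        (∀ t : Fin n, galeLE t (necklaceOf R t) H) :=
  contraction_decorated_perm_general n P j Q hQ
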